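/- Knight's identity: for all real u and v, ρ_τ(u − v) − ρ_τ(u) = v·(𝟙(u ≤ 0) − τ) + ∫₀^v (𝟙(u ≤ s) − 𝟙(u ≤ 0)) ds. -/

import Mathlib

/-!
With `x⁺ = max x 0`, the check function is `ρ_τ(x) = τ x + (-x)⁺`, so the left side is
`-τ v + (v - u)⁺ - (-u)⁺`. The integral is this difference of positive parts minus `v 𝟙(u ≤ 0)`,
because `s ↦ (s - u)⁺` has right derivative `𝟙(u ≤ s)` everywhere.
-/

open Set

lemma hasDerivWithinAt_max_sub_zero_Ioi (u x : ℝ) :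
    HasDerivWithinAt (fun s : ℝ => max (s - u) 0) (if u ≤ x then 1 else 0) (Ioi x) x := by
  split_ifs with hx
  · refine ((hasDerivAt_id x).sub_const u).hasDerivWithinAt.congr (fun y hy => ?_) ?_
    · simp [max_eq_left (by linarith [mem_Ioi.mp hy] : (0:ℝ) ≤ y - u)]
    · simp [max_eq_left (by linarith : (0:ℝ) ≤ x - u)]
  · have hxu : x < u := not_le.mp hx
    refine ((hasDerivAt_const x (0:ℝ)).congr_of_eventuallyEq ?_).hasDerivWithinAt
    filter_upwards [Iio_mem_nhds hxu] with y hy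
    exact max_eq_right (by linarith [mem_Iio.mp hy])

lemma monotone_ite_le (u : ℝ) : Monotone (fun s : ℝ => if u ≤ s then (1:ℝ) else 0) := by
  intro a b hab
  by_cases ha : u ≤ a
  · simp [ha, ha.trans hab]
  · simp only [if_neg ha]
    split_ifs <;> norm_num

lemma integral_ite_le (u a b : ℝ) :
    ∫ s in a..b, (if u ≤ s then (1:ℝ) else 0) = max (b - u) 0 - max (a - u) 0 :=
  intervalIntegral.integral_eq_sub_of_hasDeriv_right
    ((continuous_sub_right u).max continuous_const).continuousOn
    (fun x _ => hasDerivWithinAt_max_sub_zero_Ioi u x)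
    ((monotone_ite_le u).intervalIntegrable)

lemma ite_lt_zero_mul_self (x : ℝ) : (if x < 0 then (1:ℝ) else 0) * x = -max (-x) 0 := by
  split_ifs with hx
  · rw [max_eq_left (by linarith)]; ring
  · rw [max_eq_right (by linarith)]; ring

theorem knight_identity_general (τ : ℝ) (u v : ℝ) :
    (τ - if u - v < 0 then (1:ℝ) else 0) * (u - v)
      - (τ - if u < 0 then (1:ℝ) else 0) * u
    = v * ((if u ≤ 0 then (1:ℝ) else 0) - τ)
      + ∫ s in (0:ℝ)..v, ((if u ≤ s then (1:ℝ) else 0) - (if u ≤ 0 then (1:ℝ) else 0)) := by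
  rw [intervalIntegral.integral_sub (monotone_ite_le u).intervalIntegrable
    intervalIntegrable_const, integral_ite_le, intervalIntegral.integral_const, smul_eq_mul,
    zero_sub]
  have hρ₁ := ite_lt_zero_mul_self (u - v)
  rw [neg_sub] at hρ₁
  linear_combination ite_lt_zero_mul_self u - hρ₁

/-- Knight's identity for the quantile check function
`ρ_τ(u) = (τ - 𝟙(u < 0)) u`. -/
theorem knight_identity (τ : ℝ) (hτ : τ ∈ Set.Ioo (0:ℝ) 1) (u v : ℝ) :
    (τ - if u - v < 0 then (1:ℝ) else 0) * (u - v)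
      - (τ - if u < 0 then (1:ℝ) else 0) * u
    = v * ((if u ≤ 0 then (1:ℝ) else 0) - τ)
      + ∫ s in (0:ℝ)..v, ((if u ≤ s then (1:ℝ) else 0) - (if u ≤ 0 then (1:ℝ) else 0)) :=
  knight_identity_general τ u v
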